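/- arXiv:2010.05663 — 6 statements merged into one kernel-verified Lean document; each statement's English description precedes it below -/
import Mathlib

section
/- Let r > 0, let 0 < η < Y < r, and let α, β ∈ (0,1) satisfy β·((1−α)/(α+β))² > Y/η. Set Λ(r) := (1 + 4βη/((α+β)²r)) / (1 + 4Y/((1−α)²r)) (this hypothesis guarantees Λ(r) > 1). Let f be analytic on an open set containing the closed semi-disc D_r := {z ∈ ℂ : |z| ≤ r, Im z ≥ 0}, and suppose f(iβr) ≠ 0. Then the set of zeros of f in the region D_{αr,η,Y} := {z ∈ ℂ : η ≤ Im z ≤ Y, |z| ≤ αr} is finite and its cardinality is at most (2/log Λ(r)) · log( (1/min{β, 1−β}) · sup_{z ∈ ∂D_r}|f(z)| / |f(iβr)| ), where ∂D_r = {z : |z| = r, Im z ≥ 0} ∪ [−r, r] is the boundary of the semi-disc. -/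
/-!
For a zero `w` of `f` in the upper half of the disc, the factor `(z - w) (z - r² / w)` vanishes at
`w` and at its inversion in the circle `|z| = r`, and on both pieces of `∂D_r` (the segment
`[-r, r]` and the arc) it has the same modulus as the factor built from `conj w`. Dividing `f` by
these factors and multiplying by the conjugate ones gives a function `h`, analytic near `D_r`,
with `|h| = |f|` on `∂D_r`. The maximum modulus principle at `c = iβr` then bounds
`|f c|` times the product of the ratios `|q_{conj w}(c)| / |q_w(c)|` by `sup_{∂D_r} |f|`, where
`q_w(z) = (z - w) (z - r² / w)`. For zeros in `D_{αr,η,Y}` each ratio is at least `√Λ(r)`, so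
taking logarithms gives the bound, the factor `1 / min β (1 - β) ≥ 1` only weakening it.
Finiteness is the identity theorem on the compact semi-disc.
-/

open Complex ComplexConjugate Set Filter Topology

section Analytic

variable {𝕜 : Type*} [NontriviallyNormedField 𝕜] {f : 𝕜 → 𝕜} {V : Set 𝕜}

theorem AnalyticOnNhd.exists_eq_sub_mul (hf : AnalyticOnNhd 𝕜 f V) {w : 𝕜} (hw : w ∈ V)
    (hfw : f w = 0) : ∃ g : 𝕜 → 𝕜, AnalyticOnNhd 𝕜 g V ∧ ∀ z, f z = (z - w) * g z := by
  refine ⟨dslope f w, fun z hz => ?_, fun z => ?_⟩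
  · rcases eq_or_ne z w with rfl | hzw
    · obtain ⟨p, hp⟩ := hf z hz
      exact hp.has_fpower_series_dslope_fslope.analyticAt
    · have hquot : AnalyticAt 𝕜 (fun y => (f y - f w) / (y - w)) z :=
        ((hf z hz).sub analyticAt_const).div (analyticAt_id.sub analyticAt_const)
          (sub_ne_zero.2 hzw)
      refine hquot.congr ?_
      filter_upwards [isOpen_ne.mem_nhds hzw] with y hy
      rw [dslope_of_ne f hy, slope_def_field]
  · simpa [hfw] using (sub_smul_dslope f w z).symm

theorem AnalyticOnNhd.exists_eq_prod_sub_mul (hf : AnalyticOnNhd 𝕜 f V) {F : Finset 𝕜}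
    (hF : ∀ w ∈ F, w ∈ V ∧ f w = 0) :
    ∃ g : 𝕜 → 𝕜, AnalyticOnNhd 𝕜 g V ∧ ∀ z, f z = (∏ w ∈ F, (z - w)) * g z := by
  classical
  induction F using Finset.induction_on generalizing f with
  | empty => exact ⟨f, hf, by simp⟩
  | @insert w F hwF ih =>
    obtain ⟨hwV, hfw⟩ := hF w (Finset.mem_insert_self w F)
    obtain ⟨g₁, hg₁, hfg₁⟩ := hf.exists_eq_sub_mul hwV hfw
    have hF₁ : ∀ v ∈ F, v ∈ V ∧ g₁ v = 0 := fun v hv => by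
      obtain ⟨hvV, hfv⟩ := hF v (Finset.mem_insert_of_mem hv)
      have hvw : v - w ≠ 0 := sub_ne_zero.2 (ne_of_mem_of_not_mem hv hwF)
      exact ⟨hvV, (mul_eq_zero.1 ((hfg₁ v).symm.trans hfv)).resolve_left hvw⟩
    obtain ⟨g, hg, hg₁g⟩ := ih hg₁ hF₁
    exact ⟨g, hg, fun z => by rw [hfg₁ z, hg₁g z, Finset.prod_insert hwF]; ring⟩

theorem AnalyticOnNhd.finite_setOf_zero_of_isCompact {E : Type*} [NormedAddCommGroup E]
    [NormedSpace 𝕜 E] {f : 𝕜 → E} {U K : Set 𝕜}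
    (hf : AnalyticOnNhd 𝕜 f U) (hU : IsPreconnected U) (hK : IsCompact K) (hKU : K ⊆ U)
    {c : 𝕜} (hc : c ∈ U) (hfc : f c ≠ 0) : {z ∈ K | f z = 0}.Finite := by
  have hne : ∀ᶠ z in codiscreteWithin U, f z ≠ 0 :=
    (hf.eqOn_zero_or_eventually_ne_zero_of_preconnected hU).resolve_left fun h => hfc (h hc)
  exact (hK.finite_sdiff_of_mem_codiscreteWithin (codiscreteWithin_mono hKU hne)).subset
    fun z hz => ⟨hz.1, not_not_intro hz.2⟩

end Analytic

theorem IsCompact.norm_le_sSup_image_norm {X E : Type*} [TopologicalSpace X]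
    [SeminormedAddCommGroup E] {K : Set X} {f : X → E} (hK : IsCompact K) (hf : ContinuousOn f K)
    {z : X} (hz : z ∈ K) : ‖f z‖ ≤ sSup ((fun z => ‖f z‖) '' K) :=
  le_csSup (hK.image_of_continuousOn hf.norm).bddAbove ⟨z, hz, rfl⟩

def closedSemidisc (r : ℝ) : Set ℂ := {z | ‖z‖ ≤ r ∧ 0 ≤ z.im}

def openSemidisc (r : ℝ) : Set ℂ := {z | ‖z‖ < r ∧ 0 < z.im}

def semidiscBoundary (r : ℝ) : Set ℂ :=
  {z | ‖z‖ = r ∧ 0 ≤ z.im} ∪ {z | z.im = 0 ∧ |z.re| ≤ r}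

noncomputable def semidiscFactor (r : ℝ) (w z : ℂ) : ℂ := (z - w) * (z - (r : ℂ) ^ 2 / w)

section Geometry

variable {r : ℝ}

theorem isClosed_closedSemidisc : IsClosed (closedSemidisc r) :=
  (isClosed_le continuous_norm continuous_const).inter
    (isClosed_le continuous_const continuous_im)

theorem isCompact_closedSemidisc : IsCompact (closedSemidisc r) :=
  (isCompact_closedBall (0 : ℂ) r).of_isClosed_subset isClosed_closedSemidisc
    fun _ hz => mem_closedBall_zero_iff.2 hz.1

theorem convex_closedSemidisc : Convex ℝ (closedSemidisc r) := by
  have : closedSemidisc r = Metric.closedBall 0 r ∩ {z | 0 ≤ z.im} := by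
    ext z; simp [closedSemidisc]
  rw [this]
  exact (convex_closedBall _ _).inter (convex_halfSpace_im_ge 0)

theorem openSemidisc_subset_closedSemidisc : openSemidisc r ⊆ closedSemidisc r :=
  fun _ hz => ⟨hz.1.le, hz.2.le⟩

theorem semidiscBoundary_subset_closedSemidisc : semidiscBoundary r ⊆ closedSemidisc r := by
  rintro z (⟨hz, him⟩ | ⟨him, hre⟩)
  · exact ⟨hz.le, him⟩
  · refine ⟨?_, him.ge⟩
    rwa [← re_add_im z, him, ofReal_zero, zero_mul, add_zero, norm_real, Real.norm_eq_abs]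

theorem isCompact_semidiscBoundary : IsCompact (semidiscBoundary r) := by
  refine isCompact_closedSemidisc.of_isClosed_subset ?_ semidiscBoundary_subset_closedSemidisc
  exact ((isClosed_eq continuous_norm continuous_const).inter
    (isClosed_le continuous_const continuous_im)).union
    ((isClosed_eq continuous_im continuous_const).inter
      (isClosed_le (continuous_abs.comp continuous_re) continuous_const))

theorem frontier_openSemidisc_subset : frontier (openSemidisc r) ⊆ semidiscBoundary r := by
  have hopen : IsOpen (openSemidisc r) :=
    (isOpen_lt continuous_norm continuous_const).inter (isOpen_lt continuous_const continuous_im)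
  intro z hz
  rw [hopen.frontier_eq] at hz
  obtain ⟨hzr, him⟩ : z ∈ closedSemidisc r :=
    closure_minimal openSemidisc_subset_closedSemidisc isClosed_closedSemidisc hz.1
  by_cases him0 : z.im = 0
  · exact Or.inr ⟨him0, (abs_re_le_norm z).trans hzr⟩
  · refine Or.inl ⟨hzr.eq_of_not_lt fun hlt => hz.2 ⟨hlt, ?_⟩, him⟩
    exact him.lt_of_ne (Ne.symm him0)

theorem ne_zero_of_mem_openSemidisc {w : ℂ} (hw : w ∈ openSemidisc r) : w ≠ 0 :=
  fun h => by simpa [h] using hw.2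

theorem I_mul_mul_mem_openSemidisc {t : ℝ} (hr : 0 < r) (ht₀ : 0 < t) (ht₁ : t < 1) :
    I * t * r ∈ openSemidisc r := by
  refine ⟨?_, by simpa using mul_pos ht₀ hr⟩
  simpa [abs_of_pos ht₀, abs_of_pos hr] using mul_lt_of_lt_one_left hr ht₁

theorem ne_sq_div_of_mem_closedSemidisc {w z : ℂ} (hw : w ∈ openSemidisc r)
    (hz : z ∈ closedSemidisc r) : z ≠ (r : ℂ) ^ 2 / w := by
  rintro rfl
  have hw0 : 0 < ‖w‖ := norm_pos_iff.2 (ne_zero_of_mem_openSemidisc hw)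
  have hr : 0 < r := hw0.trans hw.1
  have : r * ‖w‖ < r ^ 2 := by nlinarith [hw.1]
  have h := hz.1
  rw [norm_div, norm_pow, norm_real, Real.norm_of_nonneg hr.le, div_le_iff₀ hw0] at h
  linarith

theorem ne_of_mem_semidiscBoundary {w z : ℂ} (hw : w ∈ openSemidisc r)
    (hz : z ∈ semidiscBoundary r) : z ≠ w := by
  rintro rfl
  rcases hz with ⟨hz, -⟩ | ⟨him, -⟩
  · exact hw.1.ne hz
  · exact hw.2.ne' him

theorem semidiscFactor_ne_zero {w z : ℂ} (hw : w ∈ openSemidisc r) (hz : z ∈ closedSemidisc r)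
    (hzw : z ≠ w) : semidiscFactor r w z ≠ 0 :=
  mul_ne_zero (sub_ne_zero.2 hzw) (sub_ne_zero.2 (ne_sq_div_of_mem_closedSemidisc hw hz))

end Geometry

theorem AnalyticOnNhd.finite_setOf_zero_closedSemidisc {r : ℝ} {f : ℂ → ℂ} {U : Set ℂ}
    (hDU : closedSemidisc r ⊆ U) (hf : AnalyticOnNhd ℂ f U) {c : ℂ} (hc : c ∈ closedSemidisc r)
    (hfc : f c ≠ 0) : {z ∈ closedSemidisc r | f z = 0}.Finite :=
  (hf.mono (connectedComponentIn_subset U c)).finite_setOf_zero_of_isCompact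
    isPreconnected_connectedComponentIn isCompact_closedSemidisc
    (convex_closedSemidisc.isPreconnected.subset_connectedComponentIn hc hDU)
    (mem_connectedComponentIn (hDU hc)) hfc

theorem norm_semidiscFactor_conj {r : ℝ} {w z : ℂ} (hw : w ≠ 0)
    (hz : z ∈ semidiscBoundary r) :
    ‖semidiscFactor r (conj w) z‖ = ‖semidiscFactor r w z‖ := by
  unfold semidiscFactor
  rcases hz with ⟨hz, -⟩ | ⟨him, -⟩
  · have hzz : z * conj z = (r : ℂ) ^ 2 := by
      rw [mul_conj, normSq_eq_norm_sq, hz, ofReal_pow]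
    have key : ∀ u : ℂ, u ≠ 0 → ‖z - (r : ℂ) ^ 2 / u‖ = r * ‖z - conj u‖ / ‖u‖ := by
      intro u hu
      have e : z - (r : ℂ) ^ 2 / u = z * (u - conj z) / u := by
        rw [← hzz]; field_simp
      rw [e, norm_div, norm_mul, hz, ← norm_conj (u - conj z), map_sub, conj_conj,
        norm_sub_rev]
    rw [norm_mul, norm_mul, key w hw, key _ ((map_ne_zero _).2 hw), conj_conj, norm_conj]
    ring
  · have hzc : conj z = z := conj_eq_iff_im.2 him
    rw [← norm_conj, map_mul, map_sub, map_sub, map_div₀, hzc, map_pow, conj_ofReal, conj_conj]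

theorem exists_analyticOnNhd_mul_prod_semidiscFactor_eq {r : ℝ} {f : ℂ → ℂ} {V : Set ℂ}
    (hf : AnalyticOnNhd ℂ f V) {F : Finset ℂ} (hF : ∀ w ∈ F, w ∈ V ∧ f w = 0)
    (hV : ∀ w ∈ F, ∀ z ∈ V, z ≠ (r : ℂ) ^ 2 / w) :
    ∃ h : ℂ → ℂ, AnalyticOnNhd ℂ h V ∧ ∀ z ∈ V,
      h z * ∏ w ∈ F, semidiscFactor r w z = f z * ∏ w ∈ F, semidiscFactor r (conj w) z := by
  obtain ⟨g, hg, hfg⟩ := hf.exists_eq_prod_sub_mul hF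
  refine ⟨fun z => g z * ∏ w ∈ F, semidiscFactor r (conj w) z / (z - (r : ℂ) ^ 2 / w),
    hg.mul ?_, fun z hz => ?_⟩
  · have hquot : ∀ w ∈ F, AnalyticOnNhd ℂ
        (fun z => semidiscFactor r (conj w) z / (z - (r : ℂ) ^ 2 / w)) V := fun w hw =>
      ((analyticOnNhd_id.sub analyticOnNhd_const).mul
        (analyticOnNhd_id.sub analyticOnNhd_const)).div
        (analyticOnNhd_id.sub analyticOnNhd_const) fun z hz => sub_ne_zero.2 (hV w hw z hz)
    exact Finset.analyticOnNhd_fun_prod F hquot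
  · have hne : ∀ w ∈ F, z - (r : ℂ) ^ 2 / w ≠ 0 := fun w hw => sub_ne_zero.2 (hV w hw z hz)
    simp only [hfg z, semidiscFactor, Finset.prod_mul_distrib, Finset.prod_div_distrib]
    field_simp [Finset.prod_ne_zero_iff.2 hne]

theorem norm_mul_prod_semidiscFactor_conj_le {r M : ℝ} {f : ℂ → ℂ} {U : Set ℂ}
    (hDU : closedSemidisc r ⊆ U) (hf : AnalyticOnNhd ℂ f U) {F : Finset ℂ}
    (hF : ∀ w ∈ F, w ∈ openSemidisc r ∧ f w = 0) (hM : ∀ z ∈ semidiscBoundary r, ‖f z‖ ≤ M)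
    {c : ℂ} (hc : c ∈ openSemidisc r) :
    ‖f c‖ * ∏ w ∈ F, ‖semidiscFactor r (conj w) c‖ ≤ M * ∏ w ∈ F, ‖semidiscFactor r w c‖ := by
  set V := U \ ↑(F.image fun w => (r : ℂ) ^ 2 / w)
  have hDV : closedSemidisc r ⊆ V := fun z hz => ⟨hDU hz, by
    simpa [eq_comm] using fun w hw => ne_sq_div_of_mem_closedSemidisc (hF w hw).1 hz⟩
  obtain ⟨h, hh, hfh⟩ := exists_analyticOnNhd_mul_prod_semidiscFactor_eq (r := r)
    (hf.mono sdiff_subset)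
    (fun w hw => ⟨hDV (openSemidisc_subset_closedSemidisc (hF w hw).1), (hF w hw).2⟩)
    (fun w hw z hz h => hz.2 (by simpa [eq_comm] using ⟨w, hw, h⟩))
  have hnorm : ∀ z ∈ closedSemidisc r,
      ‖h z‖ * ∏ w ∈ F, ‖semidiscFactor r w z‖ = ‖f z‖ * ∏ w ∈ F, ‖semidiscFactor r (conj w) z‖ :=
    fun z hz => by simp only [← norm_prod, ← norm_mul, hfh z (hDV hz)]
  have hbd : ∀ z ∈ frontier (openSemidisc r), ‖h z‖ ≤ M := by
    intro z hz
    have hzB := frontier_openSemidisc_subset hz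
    have hzD := semidiscBoundary_subset_closedSemidisc hzB
    have hprod : ∏ w ∈ F, ‖semidiscFactor r w z‖ ≠ 0 := Finset.prod_ne_zero_iff.2 fun w hw =>
      norm_ne_zero_iff.2 (semidiscFactor_ne_zero (hF w hw).1 hzD
        (ne_of_mem_semidiscBoundary (hF w hw).1 hzB))
    have hfz := hnorm z hzD
    rw [Finset.prod_congr rfl fun w hw =>
      norm_semidiscFactor_conj (ne_zero_of_mem_openSemidisc (hF w hw).1) hzB] at hfz
    exact (mul_right_cancel₀ hprod hfz).le.trans (hM z hzB)
  have hhc : ‖h c‖ ≤ M := by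
    refine Complex.norm_le_of_forall_mem_frontier_norm_le
      (isCompact_closedSemidisc.isBounded.subset openSemidisc_subset_closedSemidisc)
      (hh.differentiableOn.mono ?_).diffContOnCl hbd (subset_closure hc)
    exact (closure_minimal openSemidisc_subset_closedSemidisc isClosed_closedSemidisc).trans hDV
  rw [← hnorm c (openSemidisc_subset_closedSemidisc hc)]
  exact mul_le_mul_of_nonneg_right hhc (Finset.prod_nonneg fun _ _ => norm_nonneg _)

theorem norm_sq_I_mul_sub_conj (t : ℝ) (w : ℂ) :
    ‖I * t - conj w‖ ^ 2 = ‖I * t - w‖ ^ 2 + 4 * t * w.im := by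
  simp only [Complex.sq_norm, normSq_apply, sub_re, sub_im, mul_re, mul_im, I_re, I_im, ofReal_re,
    ofReal_im, conj_re, conj_im]
  ring

theorem norm_sq_I_mul_mul_sub (t s : ℝ) (w : ℂ) :
    ‖I * t * w - s‖ ^ 2 = ‖I * t * conj w - s‖ ^ 2 + 4 * t * s * w.im := by
  simp only [Complex.sq_norm, normSq_apply, sub_re, sub_im, mul_re, mul_im, I_re, I_im, ofReal_re,
    ofReal_im, conj_re, conj_im]
  ring

theorem norm_semidiscFactor_mul_norm (r : ℝ) {w : ℂ} (hw : w ≠ 0) (z : ℂ) :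
    ‖semidiscFactor r w z‖ * ‖w‖ = ‖z - w‖ * ‖z * w - (r : ℂ) ^ 2‖ := by
  rw [semidiscFactor, norm_mul, mul_assoc, ← norm_mul, sub_mul, div_mul_cancel₀ _ hw]

section CenterEstimate

variable {r η Y α β : ℝ} {w : ℂ}

theorem mul_norm_sq_sub_le (hr : 0 < r) (hη : 0 ≤ η) (hβ : 0 < β) (hαβ : 0 < α + β)
    (hηw : η ≤ w.im) (hw : ‖w‖ ≤ α * r) :
    (1 + 4 * β * η / ((α + β) ^ 2 * r)) * ‖I * β * r - w‖ ^ 2 ≤ ‖I * β * r - conj w‖ ^ 2 := by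
  have hc : (I * β * r : ℂ) = I * ((β * r : ℝ) : ℂ) := by push_cast; ring
  have hdist : ‖I * β * r - w‖ ≤ (α + β) * r := by
    calc ‖I * β * r - w‖ ≤ ‖I * β * r‖ + ‖w‖ := norm_sub_le _ _
      _ ≤ (α + β) * r := by
        rw [hc, norm_mul, norm_I, norm_real, Real.norm_of_nonneg (by positivity)]; linarith
  have hdist2 : 4 * β * η / ((α + β) ^ 2 * r) * ‖I * β * r - w‖ ^ 2 ≤ 4 * β * η * r := by
    calc 4 * β * η / ((α + β) ^ 2 * r) * ‖I * β * r - w‖ ^ 2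
        ≤ 4 * β * η / ((α + β) ^ 2 * r) * ((α + β) * r) ^ 2 := by
          gcongr
      _ = 4 * β * η * r := by field_simp
  rw [hc, norm_sq_I_mul_sub_conj, ← hc]
  nlinarith [mul_le_mul_of_nonneg_left hηw (by positivity : 0 ≤ β * r)]

theorem norm_sq_mul_sub_le (hr : 0 < r) (hα : α < 1) (hβ₀ : 0 ≤ β) (hβ₁ : β ≤ 1)
    (hw₀ : 0 ≤ w.im) (hwY : w.im ≤ Y) (hw : ‖w‖ ≤ α * r) :
    ‖I * β * r * w - (r : ℂ) ^ 2‖ ^ 2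
      ≤ (1 + 4 * Y / ((1 - α) ^ 2 * r)) * ‖I * β * r * conj w - (r : ℂ) ^ 2‖ ^ 2 := by
  have hc : (I * β * r : ℂ) = I * ((β * r : ℝ) : ℂ) := by push_cast; ring
  have hr2 : (r : ℂ) ^ 2 = ((r ^ 2 : ℝ) : ℂ) := by push_cast; ring
  have hlow : (1 - α) * r ^ 2 ≤ ‖I * β * r * conj w - (r : ℂ) ^ 2‖ := by
    have hcw : ‖I * β * r * conj w‖ ≤ α * r ^ 2 := by
      rw [hc, norm_mul, norm_mul, norm_I, norm_real, Real.norm_of_nonneg (by positivity),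
        norm_conj]
      nlinarith [mul_le_mul_of_nonneg_left hw (by positivity : 0 ≤ β * r),
        mul_nonneg (mul_nonneg (sub_nonneg.2 hβ₁) ((norm_nonneg w).trans hw)) hr.le]
    calc (1 - α) * r ^ 2 ≤ ‖(r : ℂ) ^ 2‖ - ‖I * β * r * conj w‖ := by
          rw [hr2, norm_real, Real.norm_of_nonneg (by positivity)]; linarith
      _ ≤ ‖I * β * r * conj w - (r : ℂ) ^ 2‖ := by
          rw [norm_sub_rev]; exact norm_sub_norm_le _ _
  have hgain :
      4 * Y * r ^ 3 ≤ 4 * Y / ((1 - α) ^ 2 * r) * ‖I * β * r * conj w - (r : ℂ) ^ 2‖ ^ 2 := by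
    have h1α : 0 < 1 - α := by linarith
    calc 4 * Y * r ^ 3 = 4 * Y / ((1 - α) ^ 2 * r) * ((1 - α) * r ^ 2) ^ 2 := by
          field_simp
      _ ≤ _ := by gcongr; exact div_nonneg (by linarith) (by positivity)
  rw [hc, hr2, norm_sq_I_mul_mul_sub, ← hc, ← hr2]
  nlinarith [mul_le_mul_of_nonneg_left (show β * w.im ≤ Y by nlinarith)
    (by positivity : 0 ≤ 4 * r ^ 3)]

theorem sqrt_mul_norm_semidiscFactor_le (hr : 0 < r) (hη : 0 < η) (hα : α < 1) (hβ₀ : 0 < β)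
    (hβ₁ : β < 1) (hαβ : 0 < α + β) (hηw : η ≤ w.im) (hwY : w.im ≤ Y) (hw : ‖w‖ ≤ α * r) :
    √((1 + 4 * β * η / ((α + β) ^ 2 * r)) / (1 + 4 * Y / ((1 - α) ^ 2 * r)))
        * ‖semidiscFactor r w (I * β * r)‖
      ≤ ‖semidiscFactor r (conj w) (I * β * r)‖ := by
  set c : ℂ := I * β * r
  have hw₀ : 0 < ‖w‖ := norm_pos_iff.2 fun h => by simp [h] at hηw; linarith
  have hB : 0 < 1 + 4 * Y / ((1 - α) ^ 2 * r) := by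
    have : 0 ≤ 4 * Y / ((1 - α) ^ 2 * r) := div_nonneg (by linarith) (by positivity)
    linarith
  have hsub := mul_norm_sq_sub_le hr hη.le hβ₀ hαβ hηw hw
  have hmul := norm_sq_mul_sub_le hr hα hβ₀.le hβ₁.le (hη.le.trans hηw) hwY hw
  rw [← mul_le_mul_iff_of_pos_right hw₀, mul_assoc,
    norm_semidiscFactor_mul_norm r (norm_pos_iff.1 hw₀),
    ← norm_conj w, norm_semidiscFactor_mul_norm r ((map_ne_zero _).2 (norm_pos_iff.1 hw₀)),
    ← pow_le_pow_iff_left₀ (by positivity) (by positivity) two_ne_zero, mul_pow, mul_pow,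
    mul_pow, Real.sq_sqrt (by positivity), div_mul_eq_mul_div, div_le_iff₀ hB]
  calc (1 + 4 * β * η / ((α + β) ^ 2 * r)) * (‖c - w‖ ^ 2 * ‖c * w - (r : ℂ) ^ 2‖ ^ 2)
      = ((1 + 4 * β * η / ((α + β) ^ 2 * r)) * ‖c - w‖ ^ 2) * ‖c * w - (r : ℂ) ^ 2‖ ^ 2 := by
        ring
    _ ≤ ‖c - conj w‖ ^ 2 * ((1 + 4 * Y / ((1 - α) ^ 2 * r)) * ‖c * conj w - (r : ℂ) ^ 2‖ ^ 2) :=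
        mul_le_mul hsub hmul (by positivity) (by positivity)
    _ = _ := by ring

end CenterEstimate

theorem one_lt_div_of_lt_mul_sq {r η Y α β : ℝ} (hr : 0 < r) (hη : 0 < η) (hY : 0 ≤ Y)
    (hα : α < 1) (hαβ : 0 < α + β) (hcond : Y / η < β * ((1 - α) / (α + β)) ^ 2) :
    1 < (1 + 4 * β * η / ((α + β) ^ 2 * r)) / (1 + 4 * Y / ((1 - α) ^ 2 * r)) := by
  have h1α : 0 < 1 - α := by linarith
  have hB : 0 < 1 + 4 * Y / ((1 - α) ^ 2 * r) := by positivity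
  rw [one_lt_div hB, add_lt_add_iff_left, div_lt_div_iff₀ (by positivity) (by positivity)]
  rw [div_pow, mul_div_assoc', div_lt_div_iff₀ hη (by positivity)] at hcond
  nlinarith [mul_lt_mul_of_pos_left hcond (by positivity : 0 < 4 * r)]

theorem mul_pow_card_le_of_prod_le {ι : Type*} {F : Finset ι} {p q : ι → ℝ} {a s M : ℝ}
    (ha : 0 ≤ a) (hs : 0 ≤ s) (hp : ∀ i ∈ F, 0 < p i) (hpq : ∀ i ∈ F, s * p i ≤ q i)
    (h : a * ∏ i ∈ F, q i ≤ M * ∏ i ∈ F, p i) :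
    a * s ^ F.card ≤ M := by
  have hprod : s ^ F.card * ∏ i ∈ F, p i ≤ ∏ i ∈ F, q i := by
    rw [← Finset.prod_const, ← Finset.prod_mul_distrib]
    exact Finset.prod_le_prod (fun i hi => mul_nonneg hs (hp i hi).le) hpq
  refine le_of_mul_le_mul_right ?_ (Finset.prod_pos hp)
  calc a * s ^ F.card * ∏ i ∈ F, p i ≤ a * ∏ i ∈ F, q i := by
        rw [mul_assoc]; exact mul_le_mul_of_nonneg_left hprod ha
    _ ≤ M * ∏ i ∈ F, p i := h

theorem le_two_div_log_mul_log {a M Λ m : ℝ} {N : ℕ} (ha : 0 < a) (hΛ : 1 < Λ) (hm₀ : 0 < m)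
    (hm₁ : m ≤ 1) (h : a * √Λ ^ N ≤ M) :
    (N : ℝ) ≤ 2 / Real.log Λ * Real.log (1 / m * (M / a)) := by
  have hM : √Λ ^ N ≤ M / a := by rw [le_div_iff₀ ha]; linarith
  have hlogM : N * (Real.log Λ / 2) ≤ Real.log (M / a) := by
    rw [← Real.log_sqrt (by linarith), ← Real.log_pow]
    exact Real.log_le_log (by positivity) hM
  have hlogm : Real.log (M / a) ≤ Real.log (1 / m * (M / a)) := by
    have hMa : 0 < M / a := (pow_pos (Real.sqrt_pos.2 (by linarith)) N).trans_le hM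
    rw [Real.log_mul (by positivity) hMa.ne']
    linarith [Real.log_nonneg ((one_le_div hm₀).2 hm₁)]
  rw [div_mul_eq_mul_div, le_div_iff₀ (Real.log_pos hΛ)]
  linarith

theorem zero_counting_semidisc_general
    (r η Y α β : ℝ) (hr : 0 < r) (hη : 0 < η) (hηY : η < Y)
    (hα : α ∈ Set.Ioo (0:ℝ) 1) (hβ : β ∈ Set.Ioo (0:ℝ) 1)
    (hcond : Y / η < β * ((1 - α) / (α + β)) ^ 2)
    (f : ℂ → ℂ) (U : Set ℂ)
    (hDU : {z : ℂ | ‖z‖ ≤ r ∧ 0 ≤ z.im} ⊆ U)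
    (hf : AnalyticOnNhd ℂ f U)
    (hf0 : f (Complex.I * β * r) ≠ 0) :
    {z : ℂ | (η ≤ z.im ∧ z.im ≤ Y ∧ ‖z‖ ≤ α * r) ∧ f z = 0}.Finite ∧
    ({z : ℂ | (η ≤ z.im ∧ z.im ≤ Y ∧ ‖z‖ ≤ α * r) ∧ f z = 0}.ncard : ℝ) ≤
      (2 / Real.log ((1 + 4 * β * η / ((α + β) ^ 2 * r)) / (1 + 4 * Y / ((1 - α) ^ 2 * r)))) *
        Real.log ((1 / min β (1 - β)) *
          (sSup ((fun z => ‖f z‖) ''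
            ({z : ℂ | ‖z‖ = r ∧ 0 ≤ z.im} ∪ {z : ℂ | z.im = 0 ∧ |z.re| ≤ r})) /
            ‖f (Complex.I * β * r)‖)) := by
  obtain ⟨hα₀, hα₁⟩ := hα
  obtain ⟨hβ₀, hβ₁⟩ := hβ
  have hc := I_mul_mul_mem_openSemidisc hr hβ₀ hβ₁
  have hcD := openSemidisc_subset_closedSemidisc hc
  have hZ : ∀ w ∈ {z : ℂ | (η ≤ z.im ∧ z.im ≤ Y ∧ ‖z‖ ≤ α * r) ∧ f z = 0},
      w ∈ openSemidisc r ∧ f w = 0 := fun w ⟨⟨hηw, _, hw⟩, hfw⟩ =>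
    ⟨⟨hw.trans_lt (mul_lt_of_lt_one_left hr hα₁), hη.trans_le hηw⟩, hfw⟩
  have hfin := (hf.finite_setOf_zero_closedSemidisc hDU hcD hf0).subset
    fun w hw => ⟨openSemidisc_subset_closedSemidisc (hZ w hw).1, hw.2⟩
  refine ⟨hfin, ?_⟩
  have hF : ∀ w ∈ hfin.toFinset, w ∈ openSemidisc r ∧ f w = 0 :=
    fun w hw => hZ w (hfin.mem_toFinset.1 hw)
  have hM : ∀ z ∈ semidiscBoundary r, ‖f z‖ ≤ sSup ((fun z => ‖f z‖) '' semidiscBoundary r) :=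
    fun z => isCompact_semidiscBoundary.norm_le_sSup_image_norm
      (hf.continuousOn.mono (semidiscBoundary_subset_closedSemidisc.trans hDU))
  rw [Set.ncard_eq_toFinset_card _ hfin]
  refine le_two_div_log_mul_log (norm_pos_iff.2 hf0)
    (one_lt_div_of_lt_mul_sq hr hη (hη.trans hηY).le hα₁ (by linarith) hcond)
    (lt_min hβ₀ (by linarith)) ((min_le_left _ _).trans hβ₁.le) ?_
  refine mul_pow_card_le_of_prod_le (norm_nonneg _) (Real.sqrt_nonneg _) (fun w hw => ?_)
    (fun w hw => ?_) (norm_mul_prod_semidiscFactor_conj_le hDU hf hF hM hc)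
  · exact norm_pos_iff.2 (semidiscFactor_ne_zero (hF w hw).1 hcD
      fun h => hf0 (h ▸ (hF w hw).2))
  · obtain ⟨⟨hηw, hwY, hw⟩, -⟩ := hfin.mem_toFinset.1 hw
    exact sqrt_mul_norm_semidiscFactor_le hr hη hα₁ hβ₀ hβ₁ (by linarith) hηw hwY hw

/-- Proposition 3.8: zero-counting bound for an analytic function on the closed
semi-disc `D_r = {|z| ≤ r, Im z ≥ 0}`. If `0 < η < Y < r`, `α, β ∈ (0,1)` satisfy
`β ((1-α)/(α+β))² > Y/η`, and `f` is analytic on an open neighbourhood of `D_r` with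
`f(iβr) ≠ 0`, then the number of zeros of `f` in
`D_{αr,η,Y} = {η ≤ Im z ≤ Y, |z| ≤ αr}` is at most
`(2 / log Λ(r)) · log( (1/min{β,1-β}) · sup_{∂D_r}|f| / |f(iβr)| )` where
`Λ(r) = (1 + 4βη/((α+β)²r)) / (1 + 4Y/((1-α)²r))`. -/
theorem zero_counting_semidisc
    (r η Y α β : ℝ) (hr : 0 < r) (hη : 0 < η) (hηY : η < Y) (hYr : Y < r)
    (hα : α ∈ Set.Ioo (0:ℝ) 1) (hβ : β ∈ Set.Ioo (0:ℝ) 1)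
    (hcond : Y / η < β * ((1 - α) / (α + β)) ^ 2)
    (f : ℂ → ℂ) (U : Set ℂ) (hU : IsOpen U)
    (hDU : {z : ℂ | ‖z‖ ≤ r ∧ 0 ≤ z.im} ⊆ U)
    (hf : AnalyticOnNhd ℂ f U)
    (hf0 : f (Complex.I * β * r) ≠ 0) :
    {z : ℂ | (η ≤ z.im ∧ z.im ≤ Y ∧ ‖z‖ ≤ α * r) ∧ f z = 0}.Finite ∧
    ({z : ℂ | (η ≤ z.im ∧ z.im ≤ Y ∧ ‖z‖ ≤ α * r) ∧ f z = 0}.ncard : ℝ) ≤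
      (2 / Real.log ((1 + 4 * β * η / ((α + β) ^ 2 * r)) / (1 + 4 * Y / ((1 - α) ^ 2 * r)))) *
        Real.log ((1 / min β (1 - β)) *
          (sSup ((fun z => ‖f z‖) ''
            ({z : ℂ | ‖z‖ = r ∧ 0 ≤ z.im} ∪ {z : ℂ | z.im = 0 ∧ |z.re| ≤ r})) /
            ‖f (Complex.I * β * r)‖)) :=
  zero_counting_semidisc_general r η Y α β hr hη hηY hα hβ hcond f U hDU hf hf0
end

section
/- Let γ > 0 and let λ ∈ Γ_γ ∪ [0,∞), where Γ_γ = {λ ∈ ℂ : Re λ > 0, 0 < Im λ < γ}. Then |√λ + √(λ − iγ)| ≤ γ/√|λ − iγ| and |√λ − √(λ − iγ)| ≥ √|λ − iγ|, where √|λ − iγ| on the right-hand sides denotes the nonnegative real square root of the modulus. -/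
/-!
Put `μ = λ - iγ`. Since `Re λ ≥ 0 ≤ Im λ`, the root `√λ` lies in the sector `0 ≤ arg ≤ π/4`; since
`Re μ ≥ 0 > Im μ`, the root `√μ` lies in the sector `3π/4 ≤ arg < π`. The two roots therefore make an
angle of at least `π/2`, so `|√λ - √μ| ≥ |√μ| = √|μ|`. The first bound follows from this one and
`(√λ + √μ)(√λ - √μ) = λ - μ = iγ`.
-/

open Complex

/-- `w` is the square root of `z` for the branch cut along `[0,∞)`:
`w² = z` and either `Im w > 0`, or `Im w = 0` and `Re w ≥ 0`. -/
def IsBranchSqrt (z w : ℂ) : Prop :=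
  w ^ 2 = z ∧ (0 < w.im ∨ (w.im = 0 ∧ 0 ≤ w.re))

open ComplexConjugate

lemma Complex.sq_re (w : ℂ) : (w ^ 2).re = w.re * w.re - w.im * w.im := by
  simp [pow_two]

lemma Complex.sq_im (w : ℂ) : (w ^ 2).im = 2 * w.re * w.im := by
  simp only [pow_two, mul_im]
  ring

lemma Complex.norm_eq_sqrt_norm_of_sq_eq {z w : ℂ} (h : w ^ 2 = z) : ‖w‖ = √‖z‖ := by
  rw [← h, norm_pow, Real.sqrt_sq (norm_nonneg _)]

namespace IsBranchSqrt

variable {z w : ℂ}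

lemma im_nonneg_and_im_le_re (h : IsBranchSqrt z w) (hre : 0 ≤ z.re) (him : 0 ≤ z.im) :
    0 ≤ w.im ∧ w.im ≤ w.re := by
  rw [← h.1, sq_re] at hre
  rw [← h.1, sq_im] at him
  have hwre : 0 ≤ w.re := by
    rcases h.2 with hpos | ⟨_, hnonneg⟩
    · nlinarith
    · exact hnonneg
  have hwim : 0 ≤ w.im := by rcases h.2 with hpos | ⟨hzero, _⟩ <;> linarith
  exact ⟨hwim, by nlinarith⟩

lemma im_pos_and_im_le_neg_re (h : IsBranchSqrt z w) (hre : 0 ≤ z.re) (him : z.im < 0) :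
    0 < w.im ∧ w.im ≤ -w.re := by
  rw [← h.1, sq_re] at hre
  rw [← h.1, sq_im] at him
  have hwim : 0 < w.im := by
    rcases h.2 with hpos | ⟨hzero, _⟩
    · exact hpos
    · rw [hzero, mul_zero] at him
      linarith
  have hwre : w.re < 0 := by nlinarith
  exact ⟨hwim, by nlinarith⟩

end IsBranchSqrt

lemma re_mul_conj_nonpos_of_sectors {w w' : ℂ} (hw : 0 ≤ w.im ∧ w.im ≤ w.re)
    (hw' : 0 ≤ w'.im ∧ w'.im ≤ -w'.re) : (w * conj w').re ≤ 0 := by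
  simp only [mul_re, conj_re, conj_im]
  nlinarith

lemma norm_le_norm_sub_of_re_mul_conj_nonpos {w w' : ℂ} (h : (w * conj w').re ≤ 0) :
    ‖w'‖ ≤ ‖w - w'‖ := by
  rw [norm_def, norm_def]
  exact Real.sqrt_le_sqrt (by rw [normSq_sub]; nlinarith [normSq_nonneg w])

lemma norm_add_mul_norm_sub_of_sq_sub_sq {w w' : ℂ} {γ : ℝ} (hγ : 0 ≤ γ)
    (h : w ^ 2 - w' ^ 2 = I * γ) : ‖w + w'‖ * ‖w - w'‖ = γ := by
  rw [← norm_mul, show (w + w') * (w - w') = w ^ 2 - w' ^ 2 by ring, h, norm_mul, norm_I, one_mul,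
    norm_real, Real.norm_of_nonneg hγ]

/-- Lemma 2.4 (a): if `λ ∈ Γ_γ ∪ [0,∞)` then
`|√λ + √(λ-iγ)| ≤ γ/√|λ-iγ|` and `|√λ - √(λ-iγ)| ≥ √|λ-iγ|`. -/
theorem sqrt_sum_diff_bounds_in_strip
    (γ : ℝ) (hγ : 0 < γ) (lam : ℂ)
    (hlam : (0 < lam.re ∧ 0 < lam.im ∧ lam.im < γ) ∨ (lam.im = 0 ∧ 0 ≤ lam.re))
    (w w' : ℂ) (hw : IsBranchSqrt lam w) (hw' : IsBranchSqrt (lam - Complex.I * γ) w') :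
    ‖w + w'‖ ≤ γ / Real.sqrt (‖lam - Complex.I * γ‖) ∧
    Real.sqrt (‖lam - Complex.I * γ‖) ≤ ‖w - w'‖ := by
  have hre : 0 ≤ lam.re := by rcases hlam with ⟨h, -⟩ | ⟨-, h⟩ <;> linarith
  have him : 0 ≤ lam.im := by rcases hlam with ⟨-, h, -⟩ | ⟨h, -⟩ <;> linarith
  have hμim : (lam - I * γ).im < 0 := by
    simp only [sub_im, mul_im, I_re, I_im, ofReal_re, ofReal_im]
    rcases hlam with ⟨-, -, h⟩ | ⟨h, -⟩ <;> linarith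
  have hw'sector := hw'.im_pos_and_im_le_neg_re (by simpa using hre) hμim
  have hdiff : ‖w'‖ ≤ ‖w - w'‖ := norm_le_norm_sub_of_re_mul_conj_nonpos <|
    re_mul_conj_nonpos_of_sectors (hw.im_nonneg_and_im_le_re hre him) (hw'sector.imp_left le_of_lt)
  have hprod : ‖w + w'‖ * ‖w - w'‖ = γ :=
    norm_add_mul_norm_sub_of_sq_sub_sq hγ.le (by rw [hw.1, hw'.1]; ring)
  have hw'pos : 0 < ‖w'‖ := norm_pos_iff.mpr fun h ↦ by simp [h] at hw'sector
  rw [← norm_eq_sqrt_norm_of_sq_eq hw'.1, le_div_iff₀ hw'pos]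
  exact ⟨hprod ▸ mul_le_mul_of_nonneg_left hdiff (norm_nonneg _), hdiff⟩
end

section
/- Let γ > 0 and let λ ∈ ℂ \ (Γ_γ ∪ [0,∞)), where Γ_γ = {λ ∈ ℂ : Re λ > 0, 0 < Im λ < γ}. Then |√λ + √(λ − iγ)| ≥ √|λ| and |√λ − √(λ − iγ)| ≤ γ/√|λ|, where √|λ| denotes the nonnegative real square root of the modulus |λ|. -/
open Complex

/-!
Write `w = √λ` and `w' = √(λ - iγ)`. Since `w² - w'² = iγ`, we have `‖w + w'‖ ‖w - w'‖ = γ`, so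
both bounds follow from `‖w‖ ≤ ‖w + w'‖`, which holds as soon as `⟪w, w'⟫_ℝ ≥ 0`. Both roots lie
in the closed upper half-plane. If `Re λ ≤ 0`, each root lies in the sector `|Re| ≤ Im`, and two
such vectors make an angle of at most `π/2`. If `Re λ > 0`, then outside `Γ_γ ∪ [0,∞)` the numbers
`Im λ` and `Im λ - γ` have the same sign, and the sign of `Re √z` is that of `Im z`.
-/

namespace IsBranchSqrt

variable {z w : ℂ}

lemma re_sq_sub_im_sq (h : IsBranchSqrt z w) : w.re ^ 2 - w.im ^ 2 = z.re := by
  rw [← h.1]; simp [sq]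

lemma two_mul_re_mul_im (h : IsBranchSqrt z w) : 2 * w.re * w.im = z.im := by
  rw [← h.1, sq, mul_im]; ring

lemma im_nonneg (h : IsBranchSqrt z w) : 0 ≤ w.im := by
  rcases h.2 with him | ⟨him, -⟩ <;> linarith

lemma re_nonneg_iff (h : IsBranchSqrt z w) : 0 ≤ w.re ↔ 0 ≤ z.im := by
  rw [← h.two_mul_re_mul_im]
  rcases h.2 with him | ⟨him, hre⟩
  · rw [mul_comm 2, mul_assoc, mul_nonneg_iff_of_pos_right (by positivity)]
  · simp [him, hre]

lemma re_neg_iff (h : IsBranchSqrt z w) : w.re < 0 ↔ z.im < 0 := by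
  simpa only [not_le] using h.re_nonneg_iff.not

lemma abs_re_le_im (h : IsBranchSqrt z w) (hz : z.re ≤ 0) : |w.re| ≤ w.im :=
  abs_le_of_sq_le_sq (by linarith [h.re_sq_sub_im_sq]) h.im_nonneg

lemma norm_eq_sqrt_norm (h : IsBranchSqrt z w) : ‖w‖ = √‖z‖ := by
  rw [← h.1, norm_pow, Real.sqrt_sq (norm_nonneg w)]

end IsBranchSqrt

open scoped InnerProductSpace in
lemma norm_le_norm_add_of_inner_nonneg {F : Type*} [NormedAddCommGroup F] [InnerProductSpace ℝ F]
    {x y : F} (h : 0 ≤ ⟪x, y⟫_ℝ) : ‖x‖ ≤ ‖x + y‖ :=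
  (sq_le_sq₀ (norm_nonneg _) (norm_nonneg _)).1 <| by
    nlinarith [norm_add_sq_real x y, sq_nonneg ‖y‖]

open scoped InnerProductSpace in
lemma IsBranchSqrt.inner_nonneg_outside_strip {γ : ℝ} {lam w w' : ℂ} (hw : IsBranchSqrt lam w)
    (hw' : IsBranchSqrt (lam - I * γ) w') (hγ : 0 < γ)
    (hlam : ¬ ((0 < lam.re ∧ 0 < lam.im ∧ lam.im < γ) ∨ (lam.im = 0 ∧ 0 ≤ lam.re))) :
    0 ≤ ⟪w, w'⟫_ℝ := by
  have hre' : (lam - I * γ).re = lam.re := by simp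
  have him' : (lam - I * γ).im = lam.im - γ := by simp
  have hinner : ⟪w, w'⟫_ℝ = w.re * w'.re + w.im * w'.im := by
    rw [Complex.inner]; simp only [mul_re, conj_re, conj_im]; ring
  rw [hinner]
  by_cases hre : lam.re ≤ 0
  · have hac : |w.re * w'.re| ≤ w.im * w'.im := by
      rw [abs_mul]
      exact mul_le_mul (hw.abs_re_le_im hre) (hw'.abs_re_le_im (hre'.trans_le hre))
        (abs_nonneg _) hw.im_nonneg
    linarith [neg_abs_le (w.re * w'.re)]
  · push Not at hlam hre
    have hac : 0 ≤ w.re * w'.re := by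
      rcases Ne.lt_or_gt (hlam.2.mt hre.not_gt) with him | him
      · exact (mul_pos_of_neg_of_neg (hw.re_neg_iff.2 him) (hw'.re_neg_iff.2 (by linarith))).le
      · exact mul_nonneg (hw.re_nonneg_iff.2 him.le)
          (hw'.re_nonneg_iff.2 (by linarith [hlam.1 hre him]))
    linarith [mul_nonneg hw.im_nonneg hw'.im_nonneg]

/-- Lemma 2.4 (b): if `λ ∈ ℂ \ (Γ_γ ∪ [0,∞))` then
`|√λ + √(λ-iγ)| ≥ √|λ|` and `|√λ - √(λ-iγ)| ≤ γ/√|λ|`. -/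
theorem sqrt_sum_diff_bounds_outside_strip
    (γ : ℝ) (hγ : 0 < γ) (lam : ℂ)
    (hlam : ¬ ((0 < lam.re ∧ 0 < lam.im ∧ lam.im < γ) ∨ (lam.im = 0 ∧ 0 ≤ lam.re)))
    (w w' : ℂ) (hw : IsBranchSqrt lam w) (hw' : IsBranchSqrt (lam - Complex.I * γ) w') :
    Real.sqrt ‖lam‖ ≤ ‖w + w'‖ ∧
    ‖w - w'‖ ≤ γ / Real.sqrt ‖lam‖ := by
  have hsum : √‖lam‖ ≤ ‖w + w'‖ := hw.norm_eq_sqrt_norm ▸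
    norm_le_norm_add_of_inner_nonneg (hw.inner_nonneg_outside_strip hw' hγ hlam)
  have hprod : ‖w + w'‖ * ‖w - w'‖ = γ := by
    rw [← norm_mul, ← sq_sub_sq, hw.1, hw'.1, sub_sub_cancel, norm_mul, norm_I, norm_real,
      Real.norm_of_nonneg hγ.le, one_mul]
  have hlam0 : 0 < √‖lam‖ := Real.sqrt_pos.2 <| norm_pos_iff.2 fun h => hlam (.inr (by simp [h]))
  refine ⟨hsum, (le_div_iff₀ hlam0).2 ?_⟩
  calc ‖w - w'‖ * √‖lam‖ ≤ ‖w - w'‖ * ‖w + w'‖ := by gcongr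
    _ = γ := by rw [mul_comm, hprod]
end

section
/- Let z₀ ∈ ℂ, r > 0, and let f be analytic on an open set containing the closed ball of radius r about z₀, with f(z₀) ≠ 0. Then the set of zeros of f in the closed ball of radius r/2 about z₀ is finite and its cardinality is at most (1/log 2) · log( sup_{|z − z₀| = r} |f(z)| / |f(z₀)| ). -/
/-!
Jensen's formula writes the circle average of `log ‖f‖` over `sphere z₀ r` as
`log ‖f z₀‖ + ∑ log (r / ‖a - z₀‖)`, the sum running over the zeros `a` in the ball with
multiplicity. The average is at most `log M`, and every zero in the half ball contributes at least
`log 2`.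
-/

open Metric MeromorphicOn

lemma Set.finite_and_ncard_le_finsum {α : Type*} {D : α → ℤ} (hD : D.support.Finite)
    (hD₀ : 0 ≤ D) {Z : Set α} (hZ : ∀ z ∈ Z, 1 ≤ D z) :
    Z.Finite ∧ (Z.ncard : ℤ) ≤ ∑ᶠ u, D u := by
  have hZD : Z ⊆ D.support := fun z hz => (zero_lt_one.trans_le (hZ z hz)).ne'
  have hZfin : Z.Finite := hD.subset hZD
  refine ⟨hZfin, ?_⟩
  rw [finsum_eq_sum D hD, Set.ncard_eq_toFinset_card Z hZfin, Finset.card_eq_sum_ones,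
    Nat.cast_sum, Nat.cast_one]
  calc ∑ _ ∈ hZfin.toFinset, (1 : ℤ) ≤ ∑ u ∈ hZfin.toFinset, D u :=
        Finset.sum_le_sum fun z hz => hZ z (hZfin.mem_toFinset.1 hz)
    _ ≤ ∑ u ∈ hD.toFinset, D u :=
        Finset.sum_le_sum_of_subset_of_nonneg (Set.Finite.toFinset_subset_toFinset.2 hZD)
          fun u _ _ => hD₀ u

lemma AnalyticOnNhd.one_le_divisor_of_apply_eq_zero {U : Set ℂ} {f : ℂ → ℂ} {c z : ℂ}
    (hf : AnalyticOnNhd ℂ f U) (hU : IsPreconnected U) (hc : c ∈ U) (hfc : f c ≠ 0)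
    (hz : z ∈ U) (hfz : f z = 0) : 1 ≤ divisor f U z := by
  have hfin : analyticOrderAt f z ≠ ⊤ :=
    hf.analyticOrderAt_ne_top_of_isPreconnected hU hc hz
      ((hf c hc).analyticOrderAt_eq_zero.2 hfc ▸ ENat.zero_ne_top)
  have hpos : analyticOrderAt f z ≠ 0 := by
    simpa [(hf z hz).analyticOrderAt_eq_zero] using hfz
  rw [← Nat.cast_analyticOrderNatAt hfin, Nat.cast_ne_zero] at hpos
  rw [hf.divisor_apply hz, ← Nat.cast_analyticOrderNatAt hfin]
  simpa [Nat.one_le_iff_ne_zero] using hpos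

lemma norm_le_of_forall_mem_sphere_norm_le {F : Type*} [NormedAddCommGroup F]
    [NormedSpace ℂ F] {f : ℂ → F} {c z : ℂ} {R M : ℝ} (hR : 0 < R)
    (hf : DifferentiableOn ℂ f (closedBall c R)) (hM : ∀ w ∈ sphere c R, ‖f w‖ ≤ M)
    (hz : z ∈ closedBall c R) : ‖f z‖ ≤ M := by
  have hdc : DiffContOnCl ℂ f (ball c R) := by
    rw [← closure_ball c hR.ne'] at hf
    exact hf.diffContOnCl
  exact Complex.norm_le_of_forall_mem_frontier_norm_le isBounded_ball hdc
    (frontier_ball c hR.ne' ▸ hM) (closure_ball c hR.ne' ▸ hz)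

theorem AnalyticOnNhd.finite_zeros_and_ncard_le {f : ℂ → ℂ} {c : ℂ} {r R M : ℝ} (hr : 0 < r)
    (hrR : r < R) (hf : AnalyticOnNhd ℂ f (closedBall c R)) (hfc : f c ≠ 0)
    (hM : ∀ z ∈ sphere c R, ‖f z‖ ≤ M) :
    {z | z ∈ closedBall c r ∧ f z = 0}.Finite ∧
      ({z | z ∈ closedBall c r ∧ f z = 0}.ncard : ℝ) ≤
        Real.log (M / ‖f c‖) / Real.log (R / r) := by
  have hR : 0 < R := hr.trans hrR
  -- Jensen's inequality in Mathlib needs a bound `M ≥ 1`; normalising to `g c = 1` provides it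
  -- by the maximum modulus principle.
  set g : ℂ → ℂ := fun z => f z / f c
  have hg : AnalyticOnNhd ℂ g (closedBall c R) := hf.div_const
  have hgc : g c = 1 := div_self hfc
  have hfcM : ‖f c‖ ≤ M :=
    norm_le_of_forall_mem_sphere_norm_le hR hf.differentiableOn hM (mem_closedBall_self hR.le)
  have hgM : ∀ z ∈ sphere c |R|, ‖g z‖ ≤ M / ‖f c‖ := fun z hz => by
    rw [norm_div]
    exact div_le_div_of_nonneg_right (hM z (abs_of_pos hR ▸ hz)) (norm_nonneg _)
  have hzeros : {z | z ∈ closedBall c r ∧ f z = 0} = {z | z ∈ closedBall c r ∧ g z = 0} := by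
    simp [g, hfc]
  have hg_small : AnalyticOnNhd ℂ g (closedBall c r) :=
    hg.mono (closedBall_subset_closedBall hrR.le)
  have hcount := Set.finite_and_ncard_le_finsum
    ((divisor g (closedBall c r)).finiteSupport (isCompact_closedBall c r))
    hg_small.divisor_nonneg (Z := {z | z ∈ closedBall c r ∧ g z = 0}) fun z ⟨hz, hgz⟩ =>
      hg_small.one_le_divisor_of_apply_eq_zero (convex_closedBall c r).isPreconnected
        (mem_closedBall_self hr.le) (hgc ▸ one_ne_zero) hz hgz
  have hjensen := AnalyticOnNhd.sum_divisor_le (r := r) (R := R)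
    (by rwa [abs_of_pos hr]) (by rwa [abs_of_pos hr, abs_of_pos hR])
    ((one_le_div₀ (norm_pos_iff.2 hfc)).2 hfcM) (by rwa [abs_of_pos hR]) (hgc ▸ one_ne_zero) hgM
  rw [abs_of_pos hr, hgc, norm_one, div_one] at hjensen
  rw [hzeros]
  exact ⟨hcount.1, le_trans (by exact_mod_cast hcount.2) hjensen⟩

theorem jensen_zero_count_general
    (z₀ : ℂ) (r : ℝ) (hr : 0 < r) (f : ℂ → ℂ) (U : Set ℂ)
    (hsub : Metric.closedBall z₀ r ⊆ U) (hf : AnalyticOnNhd ℂ f U) (hf0 : f z₀ ≠ 0) :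
    {z : ℂ | z ∈ Metric.closedBall z₀ (r / 2) ∧ f z = 0}.Finite ∧
    ({z : ℂ | z ∈ Metric.closedBall z₀ (r / 2) ∧ f z = 0}.ncard : ℝ) ≤
      (1 / Real.log 2) *
        Real.log (sSup ((fun z => ‖f z‖) '' Metric.sphere z₀ r) /
          ‖f z₀‖) := by
  have hbdd : BddAbove ((fun z => ‖f z‖) '' sphere z₀ r) :=
    (isCompact_sphere z₀ r).bddAbove_image
      (hf.continuousOn.mono (sphere_subset_closedBall.trans hsub)).norm
  have h := (hf.mono hsub).finite_zeros_and_ncard_le (half_pos hr) (half_lt_self hr) hf0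
    fun z hz => le_csSup hbdd ⟨z, hz, rfl⟩
  rw [div_div_cancel₀ hr.ne'] at h
  rwa [one_div_mul_eq_div]

/-- Consequence of Jensen's formula: if `f` is analytic on a neighbourhood of the
closed ball of radius `r` about `z₀` and `f(z₀) ≠ 0`, then the number of zeros of `f`
in the closed ball of radius `r/2` about `z₀` is at most
`(1/log 2) · log( sup_{|z-z₀|=r} |f(z)| / |f(z₀)| )`. -/
theorem jensen_zero_count
    (z₀ : ℂ) (r : ℝ) (hr : 0 < r) (f : ℂ → ℂ) (U : Set ℂ) (hU : IsOpen U)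
    (hsub : Metric.closedBall z₀ r ⊆ U) (hf : AnalyticOnNhd ℂ f U) (hf0 : f z₀ ≠ 0) :
    {z : ℂ | z ∈ Metric.closedBall z₀ (r / 2) ∧ f z = 0}.Finite ∧
    ({z : ℂ | z ∈ Metric.closedBall z₀ (r / 2) ∧ f z = 0}.ncard : ℝ) ≤
      (1 / Real.log 2) *
        Real.log (sSup ((fun z => ‖f z‖) '' Metric.sphere z₀ r) /
          ‖f z₀‖) :=
  jensen_zero_count_general z₀ r hr f U hsub hf hf0
end

section
/- Let r > 0, α, β ∈ (0,1), and 0 < η ≤ Y. Let w ∈ ℂ satisfy η ≤ Im w ≤ Y, |w| ≤ αr, and w ≠ iβr. Define b(z) := (z − conj(w))/(z − w) and Λ(r) := (1 + 4βη/((α+β)²r)) / (1 + 4Y/((1−α)²r)). Then: (i) |b(x)| = 1 for every real x; and (ii) for every z ∈ ℂ with |z| = r and Im z ≥ 0, one has |b(iβr)| ≥ Λ(r)^{1/2} · |b(z)|. -/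
/-!
The identity `|z - w̄|² = |z - w|² + 4 Im z Im w` gives `|b(z)|² = 1 + 4 Im z Im w / |z - w|²`,
so `|b| = 1` on the real axis. Write `Λ = Λ₁ / Λ₂`. At `z = iβr` the numerator is at least
`4βrη` and `|iβr - w| ≤ (α + β) r`, so `|b(iβr)|² ≥ Λ₁`; on the circle `|z| = r` the numerator
is at most `4rY` and `|z - w| ≥ (1 - α) r`, so `|b(z)|² ≤ Λ₂`. Hence `Λ |b(z)|² ≤ |b(iβr)|²`.
-/

open Complex

theorem Real.sqrt_div_mul_le {a b x y : ℝ} (ha : 0 ≤ a) (hay : a ≤ y ^ 2) (hxb : x ^ 2 ≤ b)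
    (hx : 0 ≤ x) (hy : 0 ≤ y) : √(a / b) * x ≤ y := by
  have hb : 0 ≤ b := (sq_nonneg x).trans hxb
  have key : a / b * x ^ 2 ≤ y ^ 2 := by
    rw [div_mul_eq_mul_div]
    exact div_le_of_le_mul₀ hb (sq_nonneg y)
      ((mul_le_mul_of_nonneg_left hxb ha).trans (mul_le_mul_of_nonneg_right hay hb))
  calc √(a / b) * x = √(a / b * x ^ 2) := by rw [Real.sqrt_mul' _ (sq_nonneg x), Real.sqrt_sq hx]
    _ ≤ y := (Real.sqrt_le_left hy).mpr key

noncomputable def blaschkeFactor (w z : ℂ) : ℂ := (z - starRingEnd ℂ w) / (z - w)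

theorem norm_blaschkeFactor_ofReal {w : ℂ} (hw : w.im ≠ 0) (x : ℝ) :
    ‖blaschkeFactor w x‖ = 1 := by
  have hxw : (x : ℂ) - w ≠ 0 := fun h => hw (by simpa using congrArg Complex.im h)
  have hconj : (x : ℂ) - starRingEnd ℂ w = starRingEnd ℂ ((x : ℂ) - w) := by simp
  rw [blaschkeFactor, norm_div, hconj, Complex.norm_conj, div_self (norm_ne_zero_iff.mpr hxw)]

theorem sq_norm_blaschkeFactor {w z : ℂ} (hzw : z ≠ w) :
    ‖blaschkeFactor w z‖ ^ 2 = 1 + 4 * z.im * w.im / ‖z - w‖ ^ 2 := by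
  have hne : ‖z - w‖ ^ 2 ≠ 0 := by simpa [sub_eq_zero] using hzw
  have hconj : ‖z - starRingEnd ℂ w‖ ^ 2 = ‖z - w‖ ^ 2 + 4 * z.im * w.im := by
    simp only [Complex.sq_norm, Complex.normSq_apply, Complex.sub_re, Complex.sub_im,
      Complex.conj_re, Complex.conj_im]
    ring
  rw [blaschkeFactor, norm_div, div_pow, hconj, add_div, div_self hne]

theorem one_add_le_sq_norm_blaschkeFactor_I_mul {α β r η : ℝ} {w : ℂ} (hβ : 0 ≤ β) (hr : 0 < r)
    (hη : 0 ≤ η) (hηw : η ≤ w.im) (hw : ‖w‖ ≤ α * r) (hwI : w ≠ I * β * r) :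
    1 + 4 * β * η / ((α + β) ^ 2 * r) ≤ ‖blaschkeFactor w (I * β * r)‖ ^ 2 := by
  have hIw : I * β * r - w ≠ 0 := sub_ne_zero.mpr hwI.symm
  have hnorm_I : ‖I * (β : ℂ) * r‖ = β * r := by
    simp [abs_of_nonneg hβ, abs_of_pos hr]
  have hdist : ‖I * β * r - w‖ ≤ (α + β) * r := by
    linarith [norm_sub_le (I * β * r) w]
  have hnum : 4 * (β * r) * η ≤ 4 * (I * β * r).im * w.im := by
    have him : (I * β * r).im = β * r := by simp
    rw [him]
    gcongr
  have hden : ‖I * β * r - w‖ ^ 2 ≤ ((α + β) * r) ^ 2 :=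
    pow_le_pow_left₀ (norm_nonneg _) hdist 2
  have hrewrite : 4 * β * η / ((α + β) ^ 2 * r) = 4 * (β * r) * η / ((α + β) * r) ^ 2 := by
    field_simp
  rw [sq_norm_blaschkeFactor hwI.symm, hrewrite]
  gcongr 1 + ?_
  exact div_le_div₀ ((by positivity : 0 ≤ 4 * (β * r) * η).trans hnum) hnum
    (pow_pos (norm_pos_iff.mpr hIw) 2) hden

theorem sq_norm_blaschkeFactor_le_one_add {α r Y : ℝ} {w z : ℂ} (hr : 0 < r) (hα : α < 1)
    (hw_im : 0 ≤ w.im) (hwY : w.im ≤ Y) (hw : ‖w‖ ≤ α * r) (hz : ‖z‖ = r) :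
    ‖blaschkeFactor w z‖ ^ 2 ≤ 1 + 4 * Y / ((1 - α) ^ 2 * r) := by
  have hgap : 0 < (1 - α) * r := mul_pos (sub_pos.mpr hα) hr
  have hdist : (1 - α) * r ≤ ‖z - w‖ := by
    linarith [norm_sub_norm_le z w]
  have hzw : z ≠ w := by
    rintro rfl
    rw [sub_self, norm_zero] at hdist
    linarith
  have hnum : 4 * z.im * w.im ≤ 4 * (r * Y) := by
    have hz_le : z.im ≤ r := hz ▸ Complex.im_le_norm z
    linarith [mul_le_mul_of_nonneg_right hz_le hw_im, mul_le_mul_of_nonneg_left hwY hr.le]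
  have hden : ((1 - α) * r) ^ 2 ≤ ‖z - w‖ ^ 2 := pow_le_pow_left₀ hgap.le hdist 2
  have hrewrite : 4 * Y / ((1 - α) ^ 2 * r) = 4 * (r * Y) / ((1 - α) * r) ^ 2 := by
    field_simp
  rw [sq_norm_blaschkeFactor hzw, hrewrite]
  gcongr 1 + ?_
  have hY : 0 ≤ Y := hw_im.trans hwY
  exact div_le_div₀ (by positivity) hnum (by positivity) hden

theorem blaschke_factor_estimates_general
    (r α β η Y : ℝ) (hr : 0 < r)
    (hα : α ∈ Set.Ioo (0:ℝ) 1) (hβ : β ∈ Set.Ioo (0:ℝ) 1)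
    (hη : 0 < η)
    (w : ℂ) (hw1 : η ≤ w.im) (hw2 : w.im ≤ Y) (hw3 : ‖w‖ ≤ α * r)
    (hw4 : w ≠ Complex.I * β * r) :
    (∀ x : ℝ, ‖(((x : ℂ) - starRingEnd ℂ w) / ((x : ℂ) - w))‖ = 1) ∧
    (∀ z : ℂ, ‖z‖ = r → 0 ≤ z.im →
      Real.sqrt ((1 + 4 * β * η / ((α + β) ^ 2 * r)) / (1 + 4 * Y / ((1 - α) ^ 2 * r))) *
          ‖((z - starRingEnd ℂ w) / (z - w))‖ ≤
        ‖((Complex.I * β * r - starRingEnd ℂ w) / (Complex.I * β * r - w))‖) := by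
  have hw_im : 0 < w.im := hη.trans_le hw1
  refine ⟨norm_blaschkeFactor_ofReal hw_im.ne', fun z hz _ => ?_⟩
  have hlower := one_add_le_sq_norm_blaschkeFactor_I_mul hβ.1.le hr hη.le hw1 hw3 hw4
  have hupper := sq_norm_blaschkeFactor_le_one_add hr hα.2 hw_im.le hw2 hw3 hz
  have hβ0 := hβ.1
  exact Real.sqrt_div_mul_le (by positivity) hlower hupper (norm_nonneg _) (norm_nonneg _)

/-- Blaschke factor estimates used in Proposition 3.8: for `b(z) = (z - w̄)/(z - w)`
with `η ≤ Im w ≤ Y`, `|w| ≤ αr`, `w ≠ iβr`, one has (i) `|b(x)| = 1` for real `x`, and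
(ii) `|b(iβr)| ≥ Λ(r)^{1/2} |b(z)|` for all `z` with `|z| = r`, `Im z ≥ 0`, where
`Λ(r) = (1 + 4βη/((α+β)²r)) / (1 + 4Y/((1-α)²r))`. -/
theorem blaschke_factor_estimates
    (r α β η Y : ℝ) (hr : 0 < r)
    (hα : α ∈ Set.Ioo (0:ℝ) 1) (hβ : β ∈ Set.Ioo (0:ℝ) 1)
    (hη : 0 < η) (hηY : η ≤ Y)
    (w : ℂ) (hw1 : η ≤ w.im) (hw2 : w.im ≤ Y) (hw3 : ‖w‖ ≤ α * r)
    (hw4 : w ≠ Complex.I * β * r) :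
    (∀ x : ℝ, ‖(((x : ℂ) - starRingEnd ℂ w) / ((x : ℂ) - w))‖ = 1) ∧
    (∀ z : ℂ, ‖z‖ = r → 0 ≤ z.im →
      Real.sqrt ((1 + 4 * β * η / ((α + β) ^ 2 * r)) / (1 + 4 * Y / ((1 - α) ^ 2 * r))) *
          ‖((z - starRingEnd ℂ w) / (z - w))‖ ≤
        ‖((Complex.I * β * r - starRingEnd ℂ w) / (Complex.I * β * r - w))‖) :=
  blaschke_factor_estimates_general r α β η Y hr hα hβ hη w hw1 hw2 hw3 hw4
end

section
/- Let γ > 0 and R > 0, and let λ ∈ Γ_γ = {λ ∈ ℂ : Re λ > 0, 0 < Im λ < γ}. Define f_R^{(0)}(λ) := (√λ − √(λ − iγ)) e^{i√(λ − iγ) R} − (√λ + √(λ − iγ)) e^{−i√(λ − iγ) R}. Suppose that: (i) √|λ − iγ| · log|λ − iγ| ≥ 8γR (with √|λ − iγ| the nonnegative real square root of the modulus); (ii) |λ − iγ|^{1/4} ≥ 2|λ − iγ|^{√2/8}; and (iii) |λ − iγ| ≥ γ^{4/3}. Then |f_R^{(0)}(λ)| ≥ |λ − iγ|^{1/4} ·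 e^{Im √(λ − iγ) · R}; in particular f_R^{(0)}(λ) ≠ 0. -/
open Complex

/-!
Write `μ = λ - iγ` and `r = |μ|^{1/4}`, so that (ii) forces `r ≥ 2` and (iii) reads `γ ≤ r³`.
Since `Re λ, Re μ > 0` while `Im λ > 0 > Im μ`, the branch puts `√λ` in the first and `√μ` in
the second quadrant, with `Re √λ ≥ r²/2` and `-Re √μ ≥ r²/√2`; hence
`|√λ - √μ| ≥ (1+√2) r²/2`. As `(√λ + √μ)(√λ - √μ) = iγ`, the other coefficient is small:
`|√λ + √μ| ≤ √2 r`. Finally `Im √μ · (-Re √μ) = (γ - Im λ)/2`, so (i) bounds `e^{2 Im √μ R}`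
by `|μ|^{√2/8} ≤ r/2`, and the first term of `f_R^{(0)}` dominates the second by the required
margin.
-/

section SquareRoot

variable {z w : ℂ}

lemma two_mul_re_sq_of_sq_eq (h : w ^ 2 = z) : 2 * w.re ^ 2 = ‖z‖ + z.re := by
  have hnorm : ‖w‖ ^ 2 = ‖z‖ := by rw [← norm_pow, h]
  rw [Complex.sq_norm, Complex.normSq_apply] at hnorm
  have hre := congrArg Complex.re h
  rw [pow_two, Complex.mul_re] at hre
  linear_combination hnorm + hre

lemma two_mul_re_mul_im_of_sq_eq (h : w ^ 2 = z) : 2 * w.re * w.im = z.im := by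
  have him := congrArg Complex.im h
  rw [pow_two, Complex.mul_im] at him
  linear_combination him

namespace IsBranchSqrt

lemma im_pos (h : IsBranchSqrt z w) (hz : z.im ≠ 0) : 0 < w.im := by
  refine h.2.resolve_right fun ⟨him, _⟩ => hz ?_
  rw [← two_mul_re_mul_im_of_sq_eq h.1, him, mul_zero]

lemma re_pos (h : IsBranchSqrt z w) (hz : 0 < z.im) : 0 < w.re := by
  have him := h.im_pos hz.ne'
  have := two_mul_re_mul_im_of_sq_eq h.1
  by_contra! hre
  nlinarith

lemma re_neg (h : IsBranchSqrt z w) (hz : z.im < 0) : w.re < 0 := by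
  have him := h.im_pos hz.ne
  have := two_mul_re_mul_im_of_sq_eq h.1
  by_contra! hre
  nlinarith

lemma le_re {a : ℝ} (h : IsBranchSqrt z w) (hz : 0 < z.im) (hre : 0 ≤ z.re) (ha : 0 ≤ a)
    (hle : 2 * a ^ 2 ≤ ‖z‖) : a ≤ w.re :=
  (pow_le_pow_iff_left₀ ha (h.re_pos hz).le two_ne_zero).1 <| by
    linarith [two_mul_re_sq_of_sq_eq h.1]

lemma le_neg_re {a : ℝ} (h : IsBranchSqrt z w) (hz : z.im < 0) (hre : 0 ≤ z.re) (ha : 0 ≤ a)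
    (hle : 2 * a ^ 2 ≤ ‖z‖) : a ≤ -w.re :=
  (pow_le_pow_iff_left₀ ha (neg_nonneg.2 (h.re_neg hz).le) two_ne_zero).1 <| by
    linarith [two_mul_re_sq_of_sq_eq h.1, neg_sq w.re]

end IsBranchSqrt

end SquareRoot

lemma two_le_rpow_of_two_mul_rpow_le {m p q : ℝ} (hm : 0 < m) (hp : 0 ≤ p) (hpq : p ≤ q)
    (h : 2 * m ^ p ≤ m ^ q) : 2 ≤ m ^ q := by
  rcases le_or_gt m 1 with hm1 | hm1
  · linarith [Real.rpow_le_rpow_of_exponent_ge hm hm1 hpq, Real.rpow_pos_of_pos hm p]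
  · linarith [Real.one_le_rpow hm1.le hp]

lemma le_pow_three_of_rpow_four_thirds_le {γ r : ℝ} (hγ : 0 ≤ γ) (hr : 0 ≤ r)
    (h : γ ^ ((4 : ℝ) / 3) ≤ r ^ 4) : γ ≤ r ^ 3 := by
  set c := γ ^ ((3 : ℕ) : ℝ)⁻¹
  have hc : 0 ≤ c := Real.rpow_nonneg hγ _
  have hc4 : γ ^ ((4 : ℝ) / 3) = c ^ 4 := by
    rw [← Real.rpow_mul_natCast hγ]; norm_num
  rw [hc4, pow_le_pow_iff_left₀ hc hr four_ne_zero] at h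
  calc γ = c ^ 3 := (Real.rpow_inv_natCast_pow hγ three_ne_zero).symm
    _ ≤ r ^ 3 := pow_le_pow_left₀ hc h 3

lemma mul_exp_le_norm_sub {A B w : ℂ} {R r : ℝ}
    (h : (r + ‖B‖) * Real.exp (2 * (w.im * R)) ≤ ‖A‖) :
    r * Real.exp (w.im * R) ≤ ‖A * exp (I * w * R) - B * exp (-I * w * R)‖ := by
  have hexp₁ : ‖exp (I * w * R)‖ = Real.exp (-(w.im * R)) := by simp [Complex.norm_exp]
  have hexp₂ : ‖exp (-I * w * R)‖ = Real.exp (w.im * R) := by simp [Complex.norm_exp]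
  have htri := norm_sub_norm_le (A * exp (I * w * R)) (B * exp (-I * w * R))
  rw [norm_mul, norm_mul, hexp₁, hexp₂] at htri
  have hdom : (r + ‖B‖) * Real.exp (w.im * R) ≤ ‖A‖ * Real.exp (-(w.im * R)) :=
    calc (r + ‖B‖) * Real.exp (w.im * R)
        = (r + ‖B‖) * Real.exp (2 * (w.im * R)) * Real.exp (-(w.im * R)) := by
          rw [mul_assoc, ← Real.exp_add]; ring_nf
      _ ≤ ‖A‖ * Real.exp (-(w.im * R)) := by gcongr
  linarith

section Estimates

variable {γ R r L : ℝ} {lam w w' : ℂ}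

lemma le_re_of_isBranchSqrt (hw : IsBranchSqrt lam w) (hre : 0 ≤ lam.re) (him : 0 < lam.im)
    (hγ : 0 ≤ γ) (hr : 2 ≤ r) (hμr : ‖lam - I * γ‖ = r ^ 4) (hγr : γ ≤ r ^ 3) :
    r ^ 2 / 2 ≤ w.re := hw.le_re him hre (by positivity) <| by
  have := norm_sub_le lam (I * γ)
  simp only [norm_mul, norm_I, norm_real, Real.norm_of_nonneg hγ, one_mul] at this
  nlinarith [pow_pos (by linarith : (0 : ℝ) < r) 3]

lemma le_neg_re_of_isBranchSqrt (hw' : IsBranchSqrt (lam - I * γ) w') (hre : 0 ≤ lam.re)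
    (himγ : lam.im < γ) (hμr : ‖lam - I * γ‖ = r ^ 4) : √2 / 2 * r ^ 2 ≤ -w'.re :=
  hw'.le_neg_re (by simpa using himγ) (by simpa using hre) (by positivity) <| le_of_eq <| by
    rw [hμr, mul_pow, div_pow, Real.sq_sqrt zero_le_two]; ring

lemma norm_add_le_of_sq_eq (hw : w ^ 2 = lam) (hw' : w' ^ 2 = lam - I * γ) (hγ : 0 ≤ γ)
    (hγr : γ ≤ r ^ 3) (hr : 0 < r) (hsub : √2 / 2 * r ^ 2 ≤ ‖w - w'‖) :
    ‖w + w'‖ ≤ √2 * r := by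
  have hprod : ‖w + w'‖ * ‖w - w'‖ = γ := by
    rw [← norm_mul, show (w + w') * (w - w') = I * γ by linear_combination hw - hw']
    simp [abs_of_nonneg hγ]
  have hsq : √2 * √2 = 2 := Real.mul_self_sqrt zero_le_two
  refine le_of_mul_le_mul_right (a := √2 / 2 * r ^ 2) ?_ (by positivity)
  calc ‖w + w'‖ * (√2 / 2 * r ^ 2) ≤ ‖w + w'‖ * ‖w - w'‖ := by gcongr
    _ ≤ √2 * r * (√2 / 2 * r ^ 2) := by rw [hprod]; linear_combination hγr - r ^ 3 / 2 * hsq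

lemma im_mul_le_of_isBranchSqrt (hw' : IsBranchSqrt (lam - I * γ) w') (him : 0 ≤ lam.im)
    (hR : 0 ≤ R) (hr : 0 < r) (hre : √2 / 2 * r ^ 2 ≤ -w'.re) (h1 : 8 * γ * R ≤ r ^ 2 * L) :
    w'.im * R ≤ √2 / 16 * L := by
  have hprod : w'.im * -w'.re = (γ - lam.im) / 2 := by
    have := two_mul_re_mul_im_of_sq_eq hw'.1
    simp only [sub_im, mul_im, I_re, I_im, ofReal_re, ofReal_im] at this
    linear_combination -this / 2
  have hsq : √2 * √2 = 2 := Real.mul_self_sqrt zero_le_two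
  refine le_of_mul_le_mul_right (a := √2 / 2 * r ^ 2) ?_ (by positivity)
  calc w'.im * R * (√2 / 2 * r ^ 2) ≤ w'.im * R * -w'.re := by
        have := hw'.im_nonneg; gcongr
    _ = R * ((γ - lam.im) / 2) := by rw [← hprod]; ring
    _ ≤ √2 / 16 * L * (√2 / 2 * r ^ 2) := by
        rw [show √2 / 16 * L * (√2 / 2 * r ^ 2) = r ^ 2 * L / 16 by
          linear_combination r ^ 2 * L / 32 * hsq]
        nlinarith

end Estimates

/-- Lower bound for `f_R^{(0)}(λ) = (√λ - √(λ-iγ)) e^{i√(λ-iγ)R} - (√λ + √(λ-iγ)) e^{-i√(λ-iγ)R}`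
for `λ ∈ Γ_γ` satisfying (i) `√|λ-iγ| log|λ-iγ| ≥ 8γR`, (ii) `|λ-iγ|^{1/4} ≥ 2|λ-iγ|^{√2/8}`,
(iii) `|λ-iγ| ≥ γ^{4/3}`: one has `|f_R^{(0)}(λ)| ≥ |λ-iγ|^{1/4} e^{Im√(λ-iγ)·R}`, and in
particular `f_R^{(0)}(λ) ≠ 0`. -/
theorem fR0_lower_bound
    (γ R : ℝ) (hγ : 0 < γ) (hR : 0 < R) (lam : ℂ)
    (hlam : 0 < lam.re ∧ 0 < lam.im ∧ lam.im < γ)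
    (w w' : ℂ) (hw : IsBranchSqrt lam w) (hw' : IsBranchSqrt (lam - Complex.I * γ) w')
    (h1 : 8 * γ * R ≤ Real.sqrt (‖lam - Complex.I * γ‖) *
      Real.log (‖lam - Complex.I * γ‖))
    (h2 : 2 * (‖lam - Complex.I * γ‖) ^ (Real.sqrt 2 / 8) ≤
      (‖lam - Complex.I * γ‖) ^ ((1:ℝ)/4))
    (h3 : γ ^ ((4:ℝ)/3) ≤ ‖lam - Complex.I * γ‖) :
    (‖lam - Complex.I * γ‖) ^ ((1:ℝ)/4) * Real.exp (w'.im * R) ≤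
      ‖(w - w') * Complex.exp (Complex.I * w' * R) -
        (w + w') * Complex.exp (-Complex.I * w' * R)‖ ∧
    (w - w') * Complex.exp (Complex.I * w' * R) -
        (w + w') * Complex.exp (-Complex.I * w' * R) ≠ 0 := by
  obtain ⟨hre, him, himγ⟩ := hlam
  set μ := lam - I * γ with hμ
  have hμ_pos : 0 < ‖μ‖ := norm_pos_iff.2 fun h0 => by simpa [hμ, hre.ne'] using congrArg re h0
  set r := ‖μ‖ ^ ((1 : ℝ) / 4)
  have hr2 : 2 ≤ r := two_le_rpow_of_two_mul_rpow_le hμ_pos (by positivity)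
    (by nlinarith [Real.sq_sqrt (zero_le_two : (0 : ℝ) ≤ 2), Real.sqrt_nonneg 2]) h2
  have hμr : ‖μ‖ = r ^ 4 := by rw [← Real.rpow_mul_natCast hμ_pos.le]; norm_num
  have hsqrt : √‖μ‖ = r ^ 2 := by
    rw [Real.sqrt_eq_rpow, ← Real.rpow_mul_natCast hμ_pos.le]; norm_num
  have hγr : γ ≤ r ^ 3 := le_pow_three_of_rpow_four_thirds_le hγ.le (by positivity) (hμr ▸ h3)
  have hw_re : r ^ 2 / 2 ≤ w.re := le_re_of_isBranchSqrt hw hre.le him hγ.le hr2 hμr hγr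
  have hw'_re : √2 / 2 * r ^ 2 ≤ -w'.re := le_neg_re_of_isBranchSqrt hw' hre.le himγ hμr
  have hsub : (1 + √2) / 2 * r ^ 2 ≤ ‖w - w'‖ :=
    calc (1 + √2) / 2 * r ^ 2 ≤ (w - w').re := by rw [sub_re]; linarith
      _ ≤ ‖w - w'‖ := re_le_norm _
  have hadd : ‖w + w'‖ ≤ √2 * r :=
    norm_add_le_of_sq_eq hw.1 hw'.1 hγ.le hγr (by positivity) (by nlinarith [sq_nonneg r])
  have hexp : Real.exp (2 * (w'.im * R)) ≤ r / 2 := by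
    have := im_mul_le_of_isBranchSqrt hw' him.le hR.le (by positivity) hw'_re (hsqrt ▸ h1)
    calc Real.exp (2 * (w'.im * R)) ≤ Real.exp (Real.log ‖μ‖ * (√2 / 8)) :=
          Real.exp_le_exp.2 (by linarith)
      _ = ‖μ‖ ^ (√2 / 8) := (Real.rpow_def_of_pos hμ_pos _).symm
      _ ≤ r / 2 := by linarith
  have hbound : r * Real.exp (w'.im * R) ≤ _ := mul_exp_le_norm_sub <|
    calc (r + ‖w + w'‖) * Real.exp (2 * (w'.im * R)) ≤ (r + √2 * r) * (r / 2) := by gcongr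
      _ = (1 + √2) / 2 * r ^ 2 := by ring
      _ ≤ ‖w - w'‖ := hsub
  refine ⟨hbound, fun h0 => ?_⟩
  rw [h0, norm_zero] at hbound
  linarith [mul_pos (by linarith : (0 : ℝ) < r) (Real.exp_pos (w'.im * R))]
end
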